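/- arXiv:1507.02602 — 2 statements merged into one kernel-verified Lean document; each statement's English description precedes it below -/
import Mathlib

section
/- Every symmetric group (G,r) of finite multipermutation level m is a solvable group of solvable length ≤ m. Explicitly: let (G,r) be a symmetric group and m ≥ 1 an integer such that for all x,y₁,…,y_m ∈ G one has ((⋯((y_m ◁ y_{m−1}) ◁ y_{m−2}) ◁ ⋯ ◁ y₂) ◁ y₁) ◁ x = ((⋯(y_{m−1} ◁ y_{m−2}) ◁ ⋯ ◁ y₂) ◁ y₁) ◁ x (this identity holds if and only if mpl(G,r) ≤ m). Then the group (G,·) is solvable with derived length ≤ m. -/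
/-- A symmetric group in the sense of Takeuchi: a group `G` together with a left
action `lact` (written `ᵃb`) and a right action `ract` (written `aᵇ`, i.e.
`ract a b = aᵇ`) satisfying the matched-pair axioms ML0, MR0, ML1, MR1, ML2,
MR2, the compatibility condition M3, and involutivity of the braiding
`r(a,b) = (ᵃb, aᵇ)`. -/
structure TakSymGroup (G : Type*) [Group G] where
  /-- the left action `(a,b) ↦ ᵃb` -/
  lact : G → G → G
  /-- the right action `(a,b) ↦ aᵇ` -/
  ract : G → G → G
  ml0  : ∀ a : G, lact a 1 = 1
  ml0' : ∀ u : G, lact 1 u = u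
  mr0  : ∀ u : G, ract 1 u = 1
  mr0' : ∀ a : G, ract a 1 = a
  ml1  : ∀ a b u : G, lact (a * b) u = lact a (lact b u)
  mr1  : ∀ a u v : G, ract a (u * v) = ract (ract a u) v
  ml2  : ∀ a u v : G, lact a (u * v) = lact a u * lact (ract a u) v
  mr2  : ∀ a b u : G, ract (a * b) u = ract a (lact b u) * ract b u
  m3   : ∀ u v : G, u * v = lact u v * ract u v
  invl : ∀ u v : G, lact (lact u v) (ract u v) = u
  invr : ∀ u v : G, ract (lact u v) (ract u v) = v

/-- The tower of actions `actTower lact x [y₁, …, y_m] =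
`((⋯(y_m ◁ y_{m−1}) ◁ ⋯ ◁ y₂) ◁ y₁) ◁ x`, where `α ◁ z := ^(α)z = lact α z`;
for the empty list it is `x` itself. -/
def actTower {X : Type*} (lact : X → X → X) : X → List X → X
  | x, [] => x
  | x, y :: ys => lact (actTower lact y ys) x

section TakAux

universe u

variable {G : Type u} [Group G] (S : TakSymGroup G)

private lemma lact_lact (a b x : G) : S.lact a (S.lact b x) = S.lact (a * b) x :=
  (S.ml1 a b x).symm

private lemma lact_inv_lact (a x : G) : S.lact a⁻¹ (S.lact a x) = x := by
  rw [lact_lact, inv_mul_cancel, S.ml0']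

private lemma lact_lact_inv (a x : G) : S.lact a (S.lact a⁻¹ x) = x := by
  rw [lact_lact, mul_inv_cancel, S.ml0']

private lemma ract_eq (a b : G) : S.ract a b = S.lact (S.lact a b)⁻¹ a := by
  have h := congrArg (S.lact (S.lact a b)⁻¹) (S.invl a b)
  rwa [lact_inv_lact] at h

/-- The socle: the kernel of the left action. -/
private def soc : Subgroup G where
  carrier := {a | ∀ x, S.lact a x = x}
  one_mem' := fun x => S.ml0' x
  mul_mem' := by
    intro a b ha hb x
    rw [S.ml1, hb, ha]
  inv_mem' := by
    intro a ha x
    conv_lhs => rw [← ha x]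
    exact lact_inv_lact S a x

private lemma mem_soc {a : G} : a ∈ soc S ↔ ∀ x, S.lact a x = x := Iff.rfl

private instance soc_normal : (soc S).Normal := by
  constructor
  intro n hn g x
  rw [S.ml1, S.ml1, hn, lact_lact_inv]

private lemma soc_lact (g n : G) (hn : n ∈ soc S) : S.lact g n = g * n * g⁻¹ := by
  have hq : g * n * g⁻¹ ∈ soc S := (soc_normal S).conj_mem n hn g
  have h1 := S.m3 (g * n * g⁻¹) g
  rw [hq g, ract_eq, hq g] at h1
  -- h1 : g * n * g⁻¹ * g = g * S.lact g⁻¹ (g * n * g⁻¹)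
  rw [inv_mul_cancel_right] at h1
  have h2 : S.lact g⁻¹ (g * n * g⁻¹) = n := mul_left_cancel h1.symm
  have h3 := congrArg (S.lact g) h2
  rw [lact_lact_inv] at h3
  exact h3.symm

private lemma soc_lact_mem (g n : G) (hn : n ∈ soc S) : S.lact g n ∈ soc S := by
  rw [soc_lact S g n hn]
  exact (soc_normal S).conj_mem n hn g

private lemma soc_ract_self (x n : G) (hn : n ∈ soc S) : S.ract x n = x := by
  rw [ract_eq]
  exact ((soc S).inv_mem (soc_lact_mem S x n hn)) x

private lemma soc_ract_mem (n b : G) (hn : n ∈ soc S) : S.ract n b ∈ soc S := by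
  rw [ract_eq, hn b]
  exact soc_lact_mem S b⁻¹ n hn

private lemma soc_comm (p q : G) (hp : p ∈ soc S) (hq : q ∈ soc S) : p * q = q * p := by
  have h := S.m3 p q
  rw [hp q, ract_eq, hp q, ((soc S).inv_mem hq) p] at h
  exact h

/-- The left action descends to the quotient by the socle. -/
private def lactQ : G ⧸ soc S → G ⧸ soc S → G ⧸ soc S :=
  fun a b => Quotient.liftOn₂' a b (fun x y => QuotientGroup.mk (S.lact x y)) (by
    intro a b a' b' ha hb
    rw [QuotientGroup.leftRel_apply] at ha hb
    apply Quotient.sound'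
    rw [QuotientGroup.leftRel_apply]
    obtain ⟨n, hn, rfl⟩ : ∃ n ∈ soc S, a' = a * n := ⟨a⁻¹ * a', ha, by group⟩
    obtain ⟨p, hp, rfl⟩ : ∃ p ∈ soc S, b' = b * p := ⟨b⁻¹ * b', hb, by group⟩
    rw [S.ml1, hn, S.ml2]
    rw [show (S.lact a b)⁻¹ * (S.lact a b * S.lact (S.ract a b) p) = S.lact (S.ract a b) p by group]
    exact soc_lact_mem S _ p hp)

/-- The right action descends to the quotient by the socle. -/
private def ractQ : G ⧸ soc S → G ⧸ soc S → G ⧸ soc S :=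
  fun a b => Quotient.liftOn₂' a b (fun x y => QuotientGroup.mk (S.ract x y)) (by
    intro a b a' b' ha hb
    rw [QuotientGroup.leftRel_apply] at ha hb
    apply Quotient.sound'
    rw [QuotientGroup.leftRel_apply]
    obtain ⟨n, hn, rfl⟩ : ∃ n ∈ soc S, a' = a * n := ⟨a⁻¹ * a', ha, by group⟩
    obtain ⟨p, hp, rfl⟩ : ∃ p ∈ soc S, b' = b * p := ⟨b⁻¹ * b', hb, by group⟩
    rw [S.mr2, hn, S.mr1, soc_ract_self S _ p hp]
    rw [show (S.ract a b)⁻¹ * (S.ract a b * S.ract n (b * p)) = S.ract n (b * p) by group]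
    exact soc_ract_mem S n _ hn)

private lemma lactQ_mk (a b : G) :
    lactQ S (QuotientGroup.mk a) (QuotientGroup.mk b) = QuotientGroup.mk (S.lact a b) := rfl

private lemma ractQ_mk (a b : G) :
    ractQ S (QuotientGroup.mk a) (QuotientGroup.mk b) = QuotientGroup.mk (S.ract a b) := rfl

/-- The symmetric-group structure on the retract `G ⧸ soc S`. -/
private def retract : TakSymGroup (G ⧸ soc S) where
  lact := lactQ S
  ract := ractQ S
  ml0 := by
    intro a
    obtain ⟨a, rfl⟩ := QuotientGroup.mk_surjective a
    rw [← QuotientGroup.mk_one, lactQ_mk, S.ml0]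
  ml0' := by
    intro u
    obtain ⟨u, rfl⟩ := QuotientGroup.mk_surjective u
    rw [← QuotientGroup.mk_one, lactQ_mk, S.ml0']
  mr0 := by
    intro u
    obtain ⟨u, rfl⟩ := QuotientGroup.mk_surjective u
    rw [← QuotientGroup.mk_one, ractQ_mk, S.mr0]
  mr0' := by
    intro a
    obtain ⟨a, rfl⟩ := QuotientGroup.mk_surjective a
    rw [← QuotientGroup.mk_one, ractQ_mk, S.mr0']
  ml1 := by
    intro a b u
    obtain ⟨a, rfl⟩ := QuotientGroup.mk_surjective a
    obtain ⟨b, rfl⟩ := QuotientGroup.mk_surjective b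
    obtain ⟨u, rfl⟩ := QuotientGroup.mk_surjective u
    rw [← QuotientGroup.mk_mul, lactQ_mk, lactQ_mk, lactQ_mk, S.ml1]
  mr1 := by
    intro a u v
    obtain ⟨a, rfl⟩ := QuotientGroup.mk_surjective a
    obtain ⟨u, rfl⟩ := QuotientGroup.mk_surjective u
    obtain ⟨v, rfl⟩ := QuotientGroup.mk_surjective v
    rw [← QuotientGroup.mk_mul, ractQ_mk, ractQ_mk, ractQ_mk, S.mr1]
  ml2 := by
    intro a u v
    obtain ⟨a, rfl⟩ := QuotientGroup.mk_surjective a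
    obtain ⟨u, rfl⟩ := QuotientGroup.mk_surjective u
    obtain ⟨v, rfl⟩ := QuotientGroup.mk_surjective v
    rw [← QuotientGroup.mk_mul, lactQ_mk, lactQ_mk, ractQ_mk, lactQ_mk,
      ← QuotientGroup.mk_mul, S.ml2]
  mr2 := by
    intro a b u
    obtain ⟨a, rfl⟩ := QuotientGroup.mk_surjective a
    obtain ⟨b, rfl⟩ := QuotientGroup.mk_surjective b
    obtain ⟨u, rfl⟩ := QuotientGroup.mk_surjective u
    rw [← QuotientGroup.mk_mul, ractQ_mk, lactQ_mk, ractQ_mk, ractQ_mk,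
      ← QuotientGroup.mk_mul, S.mr2]
  m3 := by
    intro u v
    obtain ⟨u, rfl⟩ := QuotientGroup.mk_surjective u
    obtain ⟨v, rfl⟩ := QuotientGroup.mk_surjective v
    rw [lactQ_mk, ractQ_mk, ← QuotientGroup.mk_mul, ← QuotientGroup.mk_mul, S.m3]
  invl := by
    intro u v
    obtain ⟨u, rfl⟩ := QuotientGroup.mk_surjective u
    obtain ⟨v, rfl⟩ := QuotientGroup.mk_surjective v
    rw [lactQ_mk, ractQ_mk, lactQ_mk, S.invl]
  invr := by
    intro u v
    obtain ⟨u, rfl⟩ := QuotientGroup.mk_surjective u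
    obtain ⟨v, rfl⟩ := QuotientGroup.mk_surjective v
    rw [lactQ_mk, ractQ_mk, ractQ_mk, S.invr]

private lemma actTower_mk : ∀ (ys : List G) (x : G),
    actTower (lactQ S) (QuotientGroup.mk x) (ys.map QuotientGroup.mk) =
      QuotientGroup.mk (actTower S.lact x ys)
  | [], x => rfl
  | y :: ys, x => by
    show lactQ S (actTower (lactQ S) (QuotientGroup.mk y) (ys.map QuotientGroup.mk)) _ = _
    rw [actTower_mk ys y, lactQ_mk]
    rfl

private lemma exists_list_lift (N : Subgroup G) [N.Normal] (l : List (G ⧸ N)) :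
    ∃ ys : List G, ys.map QuotientGroup.mk = l := by
  induction l with
  | nil => exact ⟨[], rfl⟩
  | cons a l ih =>
    obtain ⟨ys, rfl⟩ := ih
    obtain ⟨a, rfl⟩ := QuotientGroup.mk_surjective a
    exact ⟨a :: ys, rfl⟩

private lemma dropLast_map {α β : Type*} (f : α → β) :
    ∀ (l : List α), (l.map f).dropLast = l.dropLast.map f
  | [] => rfl
  | [_] => rfl
  | a :: b :: l => by
    rw [List.map_cons, List.map_cons, List.dropLast_cons₂, List.dropLast_cons₂,
      List.map_cons, ← List.map_cons, dropLast_map f (b :: l)]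

private theorem tak_aux : ∀ (m : ℕ) {G : Type u} [Group G] (S : TakSymGroup G),
    (∀ (x : G) (ys : List G), ys.length = m + 1 →
      actTower S.lact x ys = actTower S.lact x ys.dropLast) →
    derivedSeries G (m + 1) = ⊥ := by
  intro m
  induction m with
  | zero =>
    intro G _ S h
    have hl : ∀ y x : G, S.lact y x = x := by
      intro y x
      have := h x [y] rfl
      simpa [actTower] using this
    have hcomm : ∀ u v : G, u * v = v * u := by
      intro u v
      have h3 := S.m3 u v
      rw [hl u v, ract_eq, hl] at h3
      exact h3
    rw [eq_bot_iff, derivedSeries_succ, derivedSeries_zero]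
    rw [Subgroup.commutator_le]
    intro g _ k _
    rw [Subgroup.mem_bot, commutatorElement_eq_one_iff_mul_comm]
    exact hcomm g k
  | succ m ih =>
    intro G _ S h
    set N := soc S with hN
    have h' : ∀ (x : G ⧸ soc S) (ys : List (G ⧸ soc S)), ys.length = m + 1 →
        actTower (retract S).lact x ys = actTower (retract S).lact x ys.dropLast := by
      intro x ys hlen
      obtain ⟨x, rfl⟩ := QuotientGroup.mk_surjective x
      obtain ⟨ys, rfl⟩ := exists_list_lift (soc S) ys
      rw [List.length_map] at hlen
      show actTower (lactQ S) _ _ = actTower (lactQ S) _ _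
      rw [dropLast_map, actTower_mk, actTower_mk]
      rw [QuotientGroup.eq]
      rw [mem_soc]
      intro w
      rw [S.ml1]
      have key : S.lact (actTower S.lact x ys) w = S.lact (actTower S.lact x ys.dropLast) w := by
        have hys : ys ≠ [] := by intro hc; rw [hc] at hlen; simp at hlen
        have := h w (x :: ys) (by simp [hlen])
        rw [List.dropLast_cons_of_ne_nil hys] at this
        exact this
      rw [← key, lact_inv_lact]
    have hQ : derivedSeries (G ⧸ soc S) (m + 1) = ⊥ := ih (retract S) h'
    have hle : derivedSeries G (m + 1) ≤ soc S := by
      have h1 := map_derivedSeries_le_derivedSeries (QuotientGroup.mk' (soc S)) (m + 1)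
      rw [hQ, le_bot_iff, Subgroup.map_eq_bot_iff, QuotientGroup.ker_mk'] at h1
      exact h1
    rw [eq_bot_iff, derivedSeries_succ, Subgroup.commutator_le]
    intro g hg k hk
    rw [Subgroup.mem_bot, commutatorElement_eq_one_iff_mul_comm]
    exact soc_comm S g k (hle hg) (hle hk)

end TakAux

/-- Every symmetric group `(G,r)` of finite multipermutation level
`≤ m` (expressed by the tower identity of length `m`) is a solvable group of
derived length `≤ m`. -/
theorem symmetricGroup_mpl_solvable {G : Type*} [Group G] (S : TakSymGroup G)
    (m : ℕ) (hm : 1 ≤ m)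
    (h : ∀ (x : G) (ys : List G), ys.length = m →
        actTower S.lact x ys = actTower S.lact x ys.dropLast) :
    IsSolvable G ∧ derivedSeries G m = ⊥ := by
  obtain ⟨k, rfl⟩ : ∃ k, m = k + 1 := ⟨m - 1, (Nat.succ_pred_eq_of_pos hm).symm⟩
  have hb := tak_aux k S h
  exact ⟨⟨⟨k + 1, hb⟩⟩, hb⟩
end

section
/- Let (G,r) be a symmetric group. Then the following four conditions are equivalent: (i) L_(ᵇa) = L_a for all a,b ∈ G (i.e. ^(ᵇa)c = ᵃc for all a,b,c); (ii) L_(aᵇ) = L_a for all a,b ∈ G; (iii) R_(ᵇa) = R_a for all a,b ∈ G (i.e. c^(ᵇa) = cᵃ for all a,b,c); (iv) R_(aᵇ) = R_a for all a,b ∈ G. Moreover, each of these four conditions implies condition lri (ᵃ(bᵃ) = b = (ᵃb)ᵃ for all a,b ∈ G) and the cyclic conditions cc on (G,r). -/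
section Aux

variable {G : Type*} [Group G] (S : TakSymGroup G)

private lemma tak_linj (a : G) : Function.Injective (S.lact a) := by
  intro b c h
  have h2 := congrArg (S.lact a⁻¹) h
  rwa [← S.ml1, ← S.ml1, inv_mul_cancel, S.ml0', S.ml0'] at h2

private lemma tak_rinj (a : G) : Function.Injective (fun b => S.ract b a) := by
  intro b c h
  simp only at h
  have h2 : S.ract (S.ract b a) a⁻¹ = S.ract (S.ract c a) a⁻¹ := by rw [h]
  rwa [← S.mr1, ← S.mr1, mul_inv_cancel, S.mr0', S.mr0'] at h2

/-- (i) → lri, first half: `ᵃ(bᵃ) = b`. -/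
private lemma tak_lri1 (h : ∀ a b : G, S.lact (S.lact b a) = S.lact a) :
    ∀ a b : G, S.lact a (S.ract b a) = b := by
  intro a b
  have := congrFun (h a b) (S.ract b a)
  rw [S.invl] at this
  exact this.symm

/-- (i) → lri, second half: `(ᵃb)ᵃ = b`. -/
private lemma tak_lri2 (h : ∀ a b : G, S.lact (S.lact b a) = S.lact a) :
    ∀ a b : G, S.ract (S.lact a b) a = b := by
  intro a b
  apply tak_linj S a
  rw [tak_lri1 S h a (S.lact a b)]

/-- (i) → (iii). -/
private lemma tak_i_iii (h : ∀ a b : G, S.lact (S.lact b a) = S.lact a) :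
    ∀ a b c : G, S.ract c (S.lact b a) = S.ract c a := by
  intro a b c
  apply tak_linj S a
  have h1 : S.lact a (S.ract c (S.lact b a)) = c := by
    rw [← congrFun (h a b) (S.ract c (S.lact b a))]
    exact tak_lri1 S h (S.lact b a) c
  rw [h1, tak_lri1 S h a c]

/-- (iii) → lri, second half. -/
private lemma tak_iii_lri2 (h : ∀ a b c : G, S.ract c (S.lact b a) = S.ract c a) :
    ∀ a b : G, S.ract (S.lact a b) a = b := by
  intro a b
  -- (iii) → (iv) instance: ract c (ract a b) = ract c a
  have hiv : ∀ a b c : G, S.ract c (S.ract a b) = S.ract c a := by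
    intro a b c
    have := h (S.ract a b) (S.lact a b) c
    rw [S.invl] at this
    exact this.symm
  have := hiv a b (S.lact a b)
  rw [S.invr] at this
  exact this.symm

/-- (iii) → lri, first half. -/
private lemma tak_iii_lri1 (h : ∀ a b c : G, S.ract c (S.lact b a) = S.ract c a) :
    ∀ a b : G, S.lact a (S.ract b a) = b := by
  intro a b
  apply tak_rinj S a
  exact tak_iii_lri2 S h a (S.ract b a)

/-- (iii) → (i). -/
private lemma tak_iii_i (h : ∀ a b c : G, S.ract c (S.lact b a) = S.ract c a) :
    ∀ a b : G, S.lact (S.lact b a) = S.lact a := by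
  intro a b
  funext c
  apply tak_rinj S a
  show S.ract (S.lact (S.lact b a) c) a = S.ract (S.lact a c) a
  rw [← h a b (S.lact (S.lact b a) c), tak_iii_lri2 S h (S.lact b a) c,
    tak_iii_lri2 S h a c]

end Aux

/-- In a symmetric group `(G,r)` the four conditions
(i) `L_(ᵇa) = L_a`, (ii) `L_(aᵇ) = L_a`, (iii) `R_(ᵇa) = R_a`,
(iv) `R_(aᵇ) = R_a` (for all `a,b`) are equivalent, and each of them implies
condition lri and the cyclic conditions cc on `(G,r)`. -/
theorem symGroup_action_invariance_equivalences {G : Type*} [Group G]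
    (S : TakSymGroup G) :
    ((∀ a b : G, S.lact (S.lact b a) = S.lact a) ↔
      (∀ a b : G, S.lact (S.ract a b) = S.lact a)) ∧
    ((∀ a b : G, S.lact (S.lact b a) = S.lact a) ↔
      (∀ a b c : G, S.ract c (S.lact b a) = S.ract c a)) ∧
    ((∀ a b : G, S.lact (S.lact b a) = S.lact a) ↔
      (∀ a b c : G, S.ract c (S.ract a b) = S.ract c a)) ∧
    ((∀ a b : G, S.lact (S.lact b a) = S.lact a) →
      ((∀ a b : G, S.lact a (S.ract b a) = b ∧ S.ract (S.lact a b) a = b) ∧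
        (∀ x y : G,
          S.lact (S.ract y x) x = S.lact y x ∧
          S.ract x (S.lact x y) = S.ract x y ∧
          S.lact (S.lact x y) x = S.lact y x ∧
          S.ract x (S.ract y x) = S.ract x y))) := by
  -- (i) ↔ (ii)
  have h12 : (∀ a b : G, S.lact (S.lact b a) = S.lact a) ↔
      (∀ a b : G, S.lact (S.ract a b) = S.lact a) := by
    constructor
    · intro h a b
      have := h (S.ract a b) (S.lact a b)
      rw [S.invl] at this
      exact this.symm
    · intro h a b
      have := h (S.lact b a) (S.ract b a)
      rw [S.invr] at this
      exact this.symm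
  -- (i) ↔ (iii)
  have h13 : (∀ a b : G, S.lact (S.lact b a) = S.lact a) ↔
      (∀ a b c : G, S.ract c (S.lact b a) = S.ract c a) :=
    ⟨tak_i_iii S, tak_iii_i S⟩
  -- (iii) ↔ (iv)
  have h34 : (∀ a b c : G, S.ract c (S.lact b a) = S.ract c a) ↔
      (∀ a b c : G, S.ract c (S.ract a b) = S.ract c a) := by
    constructor
    · intro h a b c
      have := h (S.ract a b) (S.lact a b) c
      rw [S.invl] at this
      exact this.symm
    · intro h a b c
      have := h (S.lact b a) (S.ract b a) c
      rw [S.invr] at this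
      exact this.symm
  refine ⟨h12, h13, h13.trans h34, ?_⟩
  intro h1
  have h2 := h12.mp h1
  have h3 := h13.mp h1
  have h4 := h34.mp h3
  refine ⟨fun a b => ⟨tak_lri1 S h1 a b, tak_lri2 S h1 a b⟩, fun x y => ?_⟩
  refine ⟨congrFun (h2 y x) x, h3 y x x, congrFun (h1 y x) x, h4 y x x⟩
end
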